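/- arXiv:0711.3030 — 3 statements merged into one kernel-verified Lean document; each statement's English description precedes it below -/
import Mathlib

section
/- If κ is a regular uncountable cardinal, S ⊆ κ is stationary, and ⟨𝒜_α : α ∈ S⟩ is a ◊*_S-sequence (i.e. each 𝒜_α ⊆ 𝒫(α) has |𝒜_α| ≤ |α| and for every A ⊆ κ there is a club C ⊆ κ with A ∩ α ∈ 𝒜_α for all α ∈ C ∩ S), then ◊_S holds, i.e. there is a sequence ⟨A_α : α ∈ S⟩ with A_α ⊆ α such that for every A ⊆ κ the set {α ∈ S : A ∩ α = A_α} is stationary in κ. -/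
open Ordinal Set Cardinal

/-- `C` is a closed unbounded subset of the ordinal `o`. -/
def IsClubIn (o : Ordinal.{0}) (C : Set Ordinal) : Prop :=
  C ⊆ Set.Iio o ∧ (∀ a < o, ∃ b ∈ C, a ≤ b) ∧
  ∀ a < o, (C ∩ Set.Iio a).Nonempty → sSup (C ∩ Set.Iio a) = a → a ∈ C

/-- `S` is a stationary subset of the ordinal `o`. -/
def IsStatIn (o : Ordinal.{0}) (S : Set Ordinal) : Prop :=
  S ⊆ Set.Iio o ∧ ∀ C, IsClubIn o C → (S ∩ C).Nonempty

/-- The functional version of the diamond principle on `S ⊆ o`. -/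
def DiamondFun (o : Ordinal.{0}) (S : Set Ordinal) : Prop :=
  ∃ g : Ordinal → Ordinal → Ordinal,
    (∀ δ ∈ S, ∀ α < δ, g δ α < δ) ∧
    ∀ f : Ordinal → Ordinal, (∀ α < o, f α < o) →
      IsStatIn o {δ | δ ∈ S ∧ ∀ α < δ, f α = g δ α}

/-- The set version of the diamond principle on `S ⊆ o`. -/
def DiamondSet (o : Ordinal.{0}) (S : Set Ordinal) : Prop :=
  ∃ A : Ordinal → Set Ordinal,
    (∀ δ ∈ S, A δ ⊆ Set.Iio δ) ∧
    ∀ X, X ⊆ Set.Iio o → IsStatIn o {δ | δ ∈ S ∧ X ∩ Set.Iio δ = A δ}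

/-- The diamond-star principle on `S ⊆ o`. -/
def DiamondStar (o : Ordinal.{0}) (S : Set Ordinal) : Prop :=
  ∃ 𝒜 : Ordinal → Set (Set Ordinal),
    (∀ α ∈ S, (∀ X ∈ 𝒜 α, X ⊆ Set.Iio α) ∧
        Cardinal.mk ↥(𝒜 α) ≤ Cardinal.lift.{1} α.card) ∧
    ∀ X, X ⊆ Set.Iio o → ∃ C, IsClubIn o C ∧ ∀ α ∈ C ∩ S, X ∩ Set.Iio α ∈ 𝒜 α

/-- `D` is a (proper) filter on the set of ordinals below `o`. -/
def IsFilterOn (o : Ordinal.{0}) (D : Set (Set Ordinal.{0})) : Prop :=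
  (∀ A ∈ D, A ⊆ Set.Iio o) ∧ Set.Iio o ∈ D ∧ ∅ ∉ D ∧
  (∀ A ∈ D, ∀ B, B ⊆ Set.Iio o → A ⊆ B → B ∈ D) ∧
  (∀ A ∈ D, ∀ B ∈ D, A ∩ B ∈ D)

/-- `D` extends the club filter on `o`. -/
def ExtendsClubs (o : Ordinal.{0}) (D : Set (Set Ordinal.{0})) : Prop :=
  ∀ C, IsClubIn o C → C ∈ D

/-- `D` is `μ`-complete: closed under intersections of fewer than `μ` members. -/
def CompleteFor (μ : Cardinal.{0}) (o : Ordinal.{0}) (D : Set (Set Ordinal.{0})) : Prop :=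
  ∀ β : Ordinal, β.card < μ → ∀ s : Ordinal → Set Ordinal,
    (∀ i < β, s i ∈ D) → (Set.Iio o ∩ ⋂ i ∈ Set.Iio β, s i) ∈ D

/-- `S` is `D`-positive. -/
def DPos (o : Ordinal.{0}) (D : Set (Set Ordinal.{0})) (S : Set Ordinal) : Prop :=
  S ⊆ Set.Iio o ∧ (Set.Iio o \ S) ∉ D

/-- The filter `D + S`. -/
def DPlus (o : Ordinal.{0}) (D : Set (Set Ordinal.{0})) (S : Set Ordinal) : Set (Set Ordinal) :=
  {B | B ⊆ Set.Iio o ∧ B ∪ (Set.Iio o \ S) ∈ D}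

/-- The diamond principle for a filter `D` on `o`. -/
def DiamondFilter (o : Ordinal.{0}) (D : Set (Set Ordinal.{0})) : Prop :=
  ∃ S : Set Ordinal, DPos o D S ∧
    ∃ f : Ordinal → Ordinal → Ordinal,
      (∀ α ∈ S, ∀ β < α, f α β < o) ∧
      ∀ g : Ordinal → Ordinal, (∀ α < o, g α < o) →
        DPos o D {α | α ∈ S ∧ ∀ β < α, g β = f α β}

/-- `λ = o` has strong non-reflection for `S` in `κ`. -/
def SNR (o : Ordinal.{0}) (S : Set Ordinal) (κ : Cardinal.{0}) : Prop :=
  ∃ h : Ordinal → Ordinal, (∀ α < o, h α < κ.ord) ∧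
    ∃ E, IsClubIn o E ∧ ∀ δ ∈ S ∩ E, ∃ C, IsClubIn δ C ∧ StrictMonoOn h C

/-!
Kunen's argument. Enumerate each guess family `𝒜 α` as `{e α ξ | ξ < α}` and fix a pairing
`q : κ × κ → κ`. For each `ξ < κ` the `ξ`-th sections `B_ξ δ = {β < δ | q ξ β ∈ e δ ξ}` form a
candidate ◊-sequence. If every candidate failed, with counterexample `Y ξ` avoiding a club `D ξ`,
the single set `X = {q ξ β | β ∈ Y ξ}` would be guessed on a club; at a point `α ∈ S` of that club
which is closed under `q` and lies in the diagonal intersection of the `D ξ`, some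
`e α ζ = X ∩ α` with `ζ < α`, whose `ζ`-th section is `Y ζ ∩ α`, contradicting `α ∈ D ζ`.
-/

universe u

theorem exists_mapsTo_injOn_of_mk_le {α β : Type u} [Nonempty β] {s : Set α} {t : Set β}
    (h : #s ≤ #t) : ∃ f : α → β, MapsTo f s t ∧ InjOn f s := by
  classical
  obtain ⟨φ⟩ := h
  refine ⟨fun x => if hx : x ∈ s then φ ⟨x, hx⟩ else Classical.arbitrary β, fun x hx => ?_,
    fun x hx y hy hxy => ?_⟩
  · simp only [dif_pos hx, Subtype.coe_prop]
  · simp only [dif_pos hx, dif_pos hy, Subtype.coe_inj, EmbeddingLike.apply_eq_iff_eq,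
      Subtype.mk.injEq] at hxy
    exact hxy

theorem exists_subset_image_of_mk_le {α β : Type u} [Nonempty α] [Nonempty β] {s : Set α}
    {t : Set β} (h : #s ≤ #t) : ∃ e : β → α, s ⊆ e '' t := by
  obtain ⟨f, hmaps, hinj⟩ := exists_mapsTo_injOn_of_mk_le h
  exact ⟨Function.invFunOn f s, fun x hx => ⟨f x, hmaps hx, hinj.leftInvOn_invFunOn hx⟩⟩

theorem exists_pairing_of_aleph0_le {γ : Type u} {t : Set γ} (ht : ℵ₀ ≤ #t) :
    ∃ q : γ → γ → γ, MapsTo (Function.uncurry q) (t ×ˢ t) t ∧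
      InjOn (Function.uncurry q) (t ×ˢ t) := by
  have : Nonempty γ := (Cardinal.mk_ne_zero_iff.mp ((aleph0_pos.trans_le ht).ne')).map Subtype.val
  obtain ⟨f, hmaps, hinj⟩ := exists_mapsTo_injOn_of_mk_le (s := t ×ˢ t) (t := t)
    (by rw [mk_setProd, mul_eq_self ht])
  exact ⟨Function.curry f, hmaps, hinj⟩

theorem mem_biUnion_image_iff_of_injOn {α β γ : Type*} {q : α → β → γ} {s : Set α} {t : Set β}
    (hq : InjOn (Function.uncurry q) (s ×ˢ t)) {Y : α → Set β} (hY : ∀ ξ ∈ s, Y ξ ⊆ t)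
    {ζ : α} {b : β} (hζ : ζ ∈ s) (hb : b ∈ t) :
    q ζ b ∈ ⋃ ξ ∈ s, q ξ '' Y ξ ↔ b ∈ Y ζ := by
  simp only [mem_iUnion, mem_image]
  refine ⟨fun ⟨ξ, hξ, b', hb', heq⟩ => ?_, fun hbY => ⟨ζ, hζ, b, hbY, rfl⟩⟩
  obtain ⟨rfl, rfl⟩ := Prod.mk.inj (hq ⟨hξ, hY ξ hξ hb'⟩ ⟨hζ, hb⟩ heq)
  exact hb'

theorem IsClubIn.exists_gt {o b : Ordinal} {C : Set Ordinal} (hC : IsClubIn o C)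
    (ho : Order.IsSuccLimit o) (hb : b < o) : ∃ d ∈ C, b < d := by
  obtain ⟨d, hd, hbd⟩ := hC.2.1 (Order.succ b) (ho.succ_lt hb)
  exact ⟨d, hd, (Order.lt_succ b).trans_le hbd⟩

theorem IsClubIn.mem_of_next_lt {o α : Ordinal} {C : Set Ordinal} {next : Ordinal → Ordinal}
    (hC : IsClubIn o C) (hnext : ∀ b < o, next b ∈ C ∧ b < next b) (hα : α < o) (hα₀ : 0 < α)
    (hclosed : ∀ b < α, next b < α) : α ∈ C := by
  have hne : (C ∩ Iio α).Nonempty := ⟨next 0, (hnext 0 (hα₀.trans hα)).1, hclosed 0 hα₀⟩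
  refine hC.2.2 α hα hne (csSup_eq_of_forall_le_of_forall_lt_exists_gt hne
    (fun x hx => le_of_lt hx.2) fun b hb => ?_)
  exact ⟨next b, ⟨(hnext b (hb.trans hα)).1, hclosed b hb⟩, (hnext b (hb.trans hα)).2⟩

def IsClosurePoint (F : Ordinal → Ordinal → Ordinal) (α : Ordinal) : Prop :=
  ∀ ξ < α, ∀ β < α, F ξ β < α

section ClosurePoints

variable {κ : Cardinal.{0}} {F : Ordinal → Ordinal → Ordinal}

theorem exists_isClosurePoint_gt (hreg : κ.IsRegular) (hunc : ℵ₀ < κ)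
    (hF : ∀ ξ < κ.ord, ∀ β < κ.ord, F ξ β < κ.ord) {a : Ordinal} (ha : a < κ.ord) :
    ∃ α < κ.ord, a < α ∧ IsClosurePoint F α := by
  set g : Ordinal → Ordinal := fun c => ⨆ p : Iio c × Iio c, F p.1 p.2 + 1
  have hg_lt : ∀ c < κ.ord, g c < κ.ord := fun c hc => by
    refine Ordinal.lift_iSup_add_one_lt_of_lt_cof ?_
      fun p => hF _ (p.1.2.trans hc) _ (p.2.2.trans hc)
    rw [← lift_cof, hreg.cof_ord, mk_prod, Cardinal.lift_uzero, Cardinal.lift_id,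
      Cardinal.mk_Iio_ordinal, ← Cardinal.lift_mul, Cardinal.lift_lt]
    exact mul_lt_of_lt hreg.aleph0_le (lt_ord.mp hc) (lt_ord.mp hc)
  have hF_lt : ∀ c, ∀ ξ < c, ∀ β < c, F ξ β < g c := fun c ξ hξ β hβ =>
    Ordinal.lt_iSup_add_one_iff.mpr ⟨(⟨ξ, hξ⟩, ⟨β, hβ⟩), le_rfl⟩
  refine ⟨nfp g (a + 1), nfp_lt_ord (by rw [hreg.cof_ord]; exact hunc) hg_lt ?_,
    (lt_add_one a).trans_le (le_nfp g _), fun ξ hξ β hβ => ?_⟩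
  · exact (isSuccLimit_ord hreg.aleph0_le).add_one_lt ha
  obtain ⟨n, hn⟩ := lt_nfp_iff.mp (max_lt hξ hβ)
  calc F ξ β < g (g^[n] (a + 1)) :=
        hF_lt _ _ ((le_max_left _ _).trans_lt hn) _ ((le_max_right _ _).trans_lt hn)
    _ = g^[n + 1] (a + 1) := (Function.iterate_succ_apply' g n (a + 1)).symm
    _ ≤ nfp g (a + 1) := iterate_le_nfp g _ _

theorem isClubIn_setOf_isClosurePoint (hreg : κ.IsRegular) (hunc : ℵ₀ < κ)
    (hF : ∀ ξ < κ.ord, ∀ β < κ.ord, F ξ β < κ.ord) :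
    IsClubIn κ.ord {α | α < κ.ord ∧ 0 < α ∧ IsClosurePoint F α} := by
  refine ⟨fun α hα => hα.1, fun a ha => ?_, fun a ha hne hsup => ?_⟩
  · obtain ⟨α, hακ, haα, hα⟩ := exists_isClosurePoint_gt hreg hunc hF ha
    exact ⟨α, ⟨hακ, pos_of_gt haα, hα⟩, haα.le⟩
  · have ha₀ : 0 < a := let ⟨_, _, hda⟩ := hne; pos_of_gt hda
    refine ⟨ha, ha₀, fun ξ hξ β hβ => ?_⟩
    obtain ⟨γ, ⟨hγ, hγa⟩, hγ'⟩ := exists_lt_of_lt_csSup hne (hsup ▸ max_lt hξ hβ)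
    exact (hγ.2.2 ξ ((le_max_left _ _).trans_lt hγ') β
      ((le_max_right _ _).trans_lt hγ')).trans hγa

end ClosurePoints

theorem IsStatIn.exists_mem_diagonal {κ : Cardinal.{0}} (hreg : κ.IsRegular) (hunc : ℵ₀ < κ)
    {S C : Set Ordinal} (hS : IsStatIn κ.ord S) (hC : IsClubIn κ.ord C)
    {D : Ordinal → Set Ordinal} (hD : ∀ ξ, IsClubIn κ.ord (D ξ))
    {q : Ordinal → Ordinal → Ordinal} (hq : ∀ ξ < κ.ord, ∀ β < κ.ord, q ξ β < κ.ord) :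
    ∃ α ∈ S, α ∈ C ∧ IsClosurePoint q α ∧ ∀ ξ < α, α ∈ D ξ := by
  have hlim := isSuccLimit_ord hreg.aleph0_le
  choose! nextC hnextC using fun b (hb : b < κ.ord) => hC.exists_gt hlim hb
  choose! nextD hnextD using fun ξ b (hb : b < κ.ord) => (hD ξ).exists_gt hlim hb
  obtain ⟨α, hαS, hακ, hα₀, hα⟩ := hS.2 _ (isClubIn_setOf_isClosurePoint hreg hunc
    (F := fun ξ β => max (q ξ β) (max (nextC β) (nextD ξ β))) fun ξ hξ β hβ =>
      max_lt (hq ξ hξ β hβ) (max_lt (hC.1 (hnextC β hβ).1) ((hD ξ).1 (hnextD ξ β hβ).1)))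
  refine ⟨α, hαS, hC.mem_of_next_lt hnextC hακ hα₀ fun b hb => ?_,
    fun ξ hξ β hβ => (le_max_left _ _).trans_lt (hα ξ hξ β hβ),
    fun ξ hξ => (hD ξ).mem_of_next_lt (hnextD ξ) hακ hα₀ fun b hb => ?_⟩
  · exact ((le_max_left _ _).trans (le_max_right _ _)).trans_lt (hα 0 hα₀ b hb)
  · exact ((le_max_right _ _).trans (le_max_right _ _)).trans_lt (hα ξ hξ b hb)

theorem exists_club_of_not_diamondSet {o : Ordinal} {S : Set Ordinal} (hS : S ⊆ Iio o)
    (h : ¬ DiamondSet o S) (B : Ordinal → Set Ordinal) (hB : ∀ δ ∈ S, B δ ⊆ Iio δ) :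
    ∃ X ⊆ Iio o, ∃ C, IsClubIn o C ∧ ∀ δ ∈ S ∩ C, X ∩ Iio δ ≠ B δ := by
  unfold DiamondSet at h
  push Not at h
  obtain ⟨X, hX, hX_not⟩ := h B hB
  have : ¬ ∀ C, IsClubIn o C → ({δ | δ ∈ S ∧ X ∩ Iio δ = B δ} ∩ C).Nonempty :=
    fun hC => hX_not ⟨fun δ hδ => hS hδ.1, hC⟩
  push Not at this
  obtain ⟨C, hC, hempty⟩ := this
  exact ⟨X, hX, C, hC, fun δ hδ hXδ => hempty.subset ⟨⟨hδ.1, hXδ⟩, hδ.2⟩⟩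

theorem stmt0 (κ : Cardinal.{0}) (hreg : κ.IsRegular) (hunc : ℵ₀ < κ)
    (S : Set Ordinal) (hS : IsStatIn κ.ord S)
    (𝒜 : Ordinal → Set (Set Ordinal))
    (h𝒜 : ∀ α ∈ S, (∀ X ∈ 𝒜 α, X ⊆ Set.Iio α) ∧
        Cardinal.mk ↥(𝒜 α) ≤ Cardinal.lift.{1} α.card)
    (hguess : ∀ X, X ⊆ Set.Iio κ.ord →
        ∃ C, IsClubIn κ.ord C ∧ ∀ α ∈ C ∩ S, X ∩ Set.Iio α ∈ 𝒜 α) :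
    DiamondSet κ.ord S := by
  by_contra hS_not
  choose! e he using fun α (hα : α ∈ S) =>
    exists_subset_image_of_mk_le (t := Iio α) ((Cardinal.mk_Iio_ordinal α).symm ▸ (h𝒜 α hα).2)
  obtain ⟨q, hq_maps, hq_inj⟩ := exists_pairing_of_aleph0_le (t := Iio κ.ord)
    (by rw [Cardinal.mk_Iio_ordinal, card_ord, aleph0_le_lift]; exact hreg.aleph0_le)
  have hq : ∀ ξ < κ.ord, ∀ β < κ.ord, q ξ β < κ.ord := fun ξ hξ β hβ =>
    hq_maps (mk_mem_prod hξ hβ)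
  choose Y hY D hD hYD using fun ξ => exists_club_of_not_diamondSet hS.1 hS_not
    (fun δ => q ξ ⁻¹' e δ ξ ∩ Iio δ) fun _ _ => inter_subset_right
  obtain ⟨C, hC, hCX⟩ := hguess (⋃ ξ ∈ Iio κ.ord, q ξ '' Y ξ)
    (iUnion₂_subset fun ξ hξ => image_subset_iff.mpr fun β hβ => hq ξ hξ β (hY ξ hβ))
  obtain ⟨α, hαS, hαC, hαq, hαD⟩ := hS.exists_mem_diagonal hreg hunc hC hD hq
  have hακ : α < κ.ord := hS.1 hαS
  obtain ⟨ζ, hζα, hζ⟩ := he α hαS (hCX α ⟨hαC, hαS⟩)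
  refine hYD ζ α ⟨hαS, hαD ζ hζα⟩ (Set.ext fun β => and_congr_left fun hβα => ?_)
  rw [mem_preimage, hζ, mem_inter_iff, mem_biUnion_image_iff_of_injOn hq_inj (fun ξ _ => hY ξ)
    (hζα.trans hακ) (hβα.trans hακ), iff_self_and]
  exact fun _ => hαq ζ hζα β hβα
end

section
/- Suppose: (a) λ = λ^{<λ} is regular; (b) ⟨f_α : α < λ⟩ lists all functions from some ordinal α < λ into λ; (c) S is D-positive where (f) D is a χ⁺-complete filter on λ extending the club filter; (d) ⟨u_α : α ∈ S⟩ with u_α ⊆ α; (e) χ = sup{|u_α|⁺ : α ∈ S} < λ; and (g) for every g : λ → λ, for a D-positive set of δ ∈ S we have δ = sup{α ∈ u_δ : g↾α ∈ {f_β : β ∈ u_δ}}. Then ◊_D holds. -/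
open Ordinal Set Cardinal

/-!
If `◊_D` fails, every candidate sequence on `S` has a defeater: a function guessed on a
`D`-null part of `S` only. By recursion on `i < χ` choose `G i` defeating the candidate that
guesses at `δ` the values of some `f β`, `β ∈ u δ`, agreeing with all earlier `G j` (all `G i`
are read off a single `g` through an injection `χ × λ → λ`). By `χ⁺`-completeness and (g) there
is a `δ ∈ S`, closed under the coding, at which every `G i` is defeated while the `f β`,
`β ∈ u δ`, approximate `g` cofinally in `δ`. Then every stage `i < χ` has some `β ∈ u δ` whose
first disagreement with the `G j` happens at `j = i`, so `|u δ| ≥ χ`, against `|u δ|⁺ ≤ χ`.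
For `λ = ω` no such `D` exists, as the even and the odd numbers are disjoint clubs.
-/

universe u

theorem isClubIn_omega0 {X : Set Ordinal} (hX : X ⊆ Iio ω) (hunb : ∀ a < ω, ∃ b ∈ X, a ≤ b) :
    IsClubIn ω X := by
  refine ⟨hX, hunb, fun a ha hne hsup => ?_⟩
  obtain ⟨n, rfl⟩ := Ordinal.lt_omega0.1 ha
  cases n with
  | zero => simp at hne
  | succ k =>
    have : sSup (X ∩ Iio ((k + 1 : ℕ) : Ordinal)) ≤ k :=
      csSup_le hne fun x hx => Order.lt_add_one_iff.1 (by simpa using hx.2)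
    rw [hsup] at this
    exact absurd this (by norm_cast; omega)

theorem not_extendsClubs_omega0 {D : Set (Set Ordinal.{0})} (hD : IsFilterOn ω D) :
    ¬ ExtendsClubs ω D := by
  intro hclub
  let parity (r : ℕ) : Set Ordinal := {a | ∃ n : ℕ, a = ((2 * n + r : ℕ) : Ordinal)}
  have hparity (r : ℕ) : parity r ∈ D := by
    refine hclub _ (isClubIn_omega0 ?_ fun a ha => ?_)
    · rintro _ ⟨n, rfl⟩
      exact natCast_lt_omega0 _
    · obtain ⟨m, rfl⟩ := Ordinal.lt_omega0.1 ha
      exact ⟨_, ⟨m, rfl⟩, by norm_cast; omega⟩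
  have hdisj : parity 0 ∩ parity 1 = ∅ := by
    refine eq_empty_of_forall_notMem ?_
    rintro _ ⟨⟨n, rfl⟩, m, hm⟩
    norm_cast at hm
    omega
  exact hD.2.2.1 (hdisj ▸ hD.2.2.2.2 _ (hparity 0) _ (hparity 1))

theorem isClubIn_closurePoints {l κ : Cardinal.{0}} (hl : l.IsRegular) (hlω : l ≠ ℵ₀)
    (hκ : κ < l) (F : Ordinal → Ordinal → Ordinal)
    (hF : ∀ i < κ.ord, ∀ ζ < l.ord, F i ζ < l.ord) :
    IsClubIn l.ord {δ | δ < l.ord ∧ ∀ i < κ.ord, ∀ ζ < δ, F i ζ < δ} := by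
  have hlim : Order.IsSuccLimit l.ord := isSuccLimit_ord hl.aleph0_le
  let next (x : Ordinal) : Ordinal :=
    ⨆ p : κ.ord.ToType × x.ToType, Order.succ (F (ToType.toOrd p.1) (ToType.toOrd p.2))
  have next_lt (x) (hx : x < l.ord) : next x < l.ord := by
    refine iSup_lt_of_lt_cof ?_ fun p => hlim.succ_lt (hF _ (ToType.toOrd p.1).2 _
      ((ToType.toOrd p.2).2.trans hx))
    rw [hl.cof_ord, mk_prod, Cardinal.lift_id, Cardinal.lift_id, mk_toType, mk_toType, card_ord]
    exact mul_lt_of_lt hl.aleph0_le hκ (lt_ord.1 hx)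
  have lt_next (x) (i) (hi : i < κ.ord) (ζ) (hζ : ζ < x) : F i ζ < next x := by
    refine (Order.lt_succ _).trans_le ?_
    convert Ordinal.le_iSup _ (ToType.mk ⟨i, hi⟩, ToType.mk ⟨ζ, hζ⟩)
    simp
  refine ⟨fun δ hδ => hδ.1, fun a ha => ⟨nfp next a, ⟨nfp_lt_ord_of_isRegular hl hlω next_lt ha,
    fun i hi ζ hζ => ?_⟩, le_nfp _ _⟩, fun a ha hne hsup => ⟨ha, fun i hi ζ hζ => ?_⟩⟩
  · obtain ⟨n, hn⟩ := lt_nfp_iff.1 hζ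
    calc F i ζ < next (next^[n] a) := lt_next _ i hi ζ hn
      _ = next^[n + 1] a := (Function.iterate_succ_apply' _ _ _).symm
      _ ≤ nfp next a := iterate_le_nfp _ _ _
  · obtain ⟨x, ⟨hxC, hxa⟩, hζx⟩ : ∃ x ∈ {δ | δ < l.ord ∧ ∀ i < κ.ord, ∀ ζ < δ, F i ζ < δ} ∩ Iio a,
        ζ < x := by
      by_contra! h
      exact (csSup_le hne h).not_gt (by rwa [hsup])
    exact (hxC.2 i hi ζ hζx).trans hxa

theorem exists_injOn_prod_Iio {κ l : Cardinal.{0}} (hl : ℵ₀ ≤ l) (hκ : κ ≤ l) :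
    ∃ pr : Ordinal × Ordinal → Ordinal, MapsTo pr (Iio κ.ord ×ˢ Iio l.ord) (Iio l.ord) ∧
      InjOn pr (Iio κ.ord ×ˢ Iio l.ord) := by
  have hmk : #(Iio κ.ord × Iio l.ord) ≤ #(Iio l.ord) := by
    rw [mk_prod, Cardinal.lift_id, Cardinal.lift_id, Cardinal.mk_Iio_ordinal,
      Cardinal.mk_Iio_ordinal, card_ord, card_ord]
    exact (mul_le_mul_left (lift_le.2 hκ) _).trans (mul_eq_self (aleph0_le_lift.2 hl)).le
  obtain ⟨e⟩ := (le_def _ _).1 hmk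
  classical
  refine ⟨fun p => if h : p.1 < κ.ord ∧ p.2 < l.ord then e (⟨p.1, h.1⟩, ⟨p.2, h.2⟩) else 0,
    fun p hp => ?_, fun p hp q hq hpq => ?_⟩
  · simp only [dif_pos (show p.1 < κ.ord ∧ p.2 < l.ord from hp)]
    exact (e _).2
  · simp only [dif_pos (show p.1 < κ.ord ∧ p.2 < l.ord from hp),
      dif_pos (show q.1 < κ.ord ∧ q.2 < l.ord from hq)] at hpq
    have := e.injective (Subtype.ext hpq)
    simp only [Prod.mk.injEq] at this
    exact Prod.ext (congrArg Subtype.val this.1) (congrArg Subtype.val this.2)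

theorem Set.InjOn.exists_comp_eqOn {α β γ : Type*} {s : Set α} {pr : α → β} (hpr : InjOn pr s)
    {t : Set γ} (ht : t.Nonempty) {G : α → γ} (hG : MapsTo G s t) :
    ∃ g : β → γ, (∀ b, g b ∈ t) ∧ EqOn (g ∘ pr) G s := by
  have hinj : Function.Injective (fun p : s => pr p) := fun p q h => Subtype.ext (hpr p.2 q.2 h)
  refine ⟨Function.extend (fun p : s => pr p) (fun p => G p) (fun _ => ht.some), fun b => ?_,
    fun p hp => hinj.extend_apply _ _ ⟨p, hp⟩⟩
  obtain ⟨p, hp⟩ | ⟨b', -, hb'⟩ := Set.range_extend_subset _ _ _ ⟨b, rfl⟩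
  · exact hp ▸ hG p.2
  · exact hb' ▸ ht.some_mem

theorem DPos.inter_nonempty {o : Ordinal} {D : Set (Set Ordinal.{0})} {A B : Set Ordinal}
    (hD : IsFilterOn o D) (hA : DPos o D A) (hB : B ∈ D) : (A ∩ B).Nonempty := by
  by_contra h
  refine hA.2 (hD.2.2.2.1 B hB _ sdiff_subset fun x hx => ⟨hD.1 B hB hx, fun hxA => h ⟨x, hxA, hx⟩⟩)

theorem mk_le_of_forall_exists_first {ι β : Type u} [LinearOrder ι] (P : ι → β → Prop)
    (T : Set β) (h : ∀ i, ∃ b ∈ T, P i b ∧ ∀ j < i, ¬ P j b) : #ι ≤ #T := by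
  choose k hkT hk using h
  refine mk_le_of_injective (f := fun i => (⟨k i, hkT i⟩ : T)) fun i j hij => ?_
  have hkij : k i = k j := congrArg Subtype.val hij
  by_contra hne
  rcases lt_or_gt_of_ne hne with hlt | hlt
  · exact (hk j).2 i hlt (hkij ▸ (hk i).1)
  · exact (hk i).2 j hlt (hkij ▸ (hk j).1)

theorem exists_forall_eq_of_congr {α : Type*} [Inhabited α] (Φ : (Ordinal → α) → Ordinal → α)
    (hΦ : ∀ P Q i, (∀ j < i, P j = Q j) → Φ P i = Φ Q i) : ∃ G : Ordinal → α, ∀ i, G i = Φ G i := by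
  classical
  let G : Ordinal → α :=
    Ordinal.lt_wf.fix fun i IH => Φ (fun j => if h : j < i then IH j h else default) i
  refine ⟨G, fun i => (Ordinal.lt_wf.fix_eq _ i).trans (hΦ _ _ i fun j hj => ?_)⟩
  simp only [dif_pos hj]
  rfl

theorem exists_defeater_of_not_diamondFilter {o : Ordinal} {D : Set (Set Ordinal.{0})}
    {S : Set Ordinal} (hS : DPos o D S) (h : ¬ DiamondFilter o D) (c : Ordinal → Ordinal → Ordinal)
    (hc : ∀ α ∈ S, ∀ β < α, c α β < o) :
    ∃ g : Ordinal → Ordinal, (∀ α < o, g α < o) ∧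
      Iio o \ {α | α ∈ S ∧ ∀ β < α, g β = c α β} ∈ D := by
  by_contra! hg
  exact h ⟨S, hS, c, hc, fun g hgo => ⟨fun α hα => hS.1 hα.1, hg g hgo⟩⟩

section Construction

variable (f : Ordinal → Ordinal × (Ordinal → Ordinal)) (u : Ordinal → Set Ordinal)
  (pr : Ordinal × Ordinal → Ordinal) (o : Ordinal)

/-- `f β` is read as the partial function `(f β).2` with domain `(f β).1`, and `G i` as the row
`ζ ↦ g (pr (i, ζ))` of a single coded function `g`. -/
def DisagreesAt (G : Ordinal → Ordinal → Ordinal) (i β : Ordinal) : Prop :=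
  ∃ ζ < o, pr (i, ζ) < (f β).1 ∧ (f β).2 (pr (i, ζ)) ≠ G i ζ

def coherentSet (G : Ordinal → Ordinal → Ordinal) (i δ ζ : Ordinal) : Set Ordinal :=
  {β | β ∈ u δ ∧ (∀ j < i, ¬ DisagreesAt f pr o G j β) ∧ pr (i, ζ) < (f β).1}

open scoped Classical in
noncomputable def candidate (G : Ordinal → Ordinal → Ordinal) (i δ ζ : Ordinal) : Ordinal :=
  if h : (coherentSet f u pr o G i δ ζ).Nonempty then (f h.some).2 (pr (i, ζ)) else 0

variable {f u pr o}

theorem candidate_congr {P Q : Ordinal → Ordinal → Ordinal} {i : Ordinal}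
    (h : ∀ j < i, P j = Q j) : candidate f u pr o P i = candidate f u pr o Q i := by
  have hdis (j : Ordinal) (hj : j < i) : DisagreesAt f pr o P j = DisagreesAt f pr o Q j := by
    funext β
    simp only [DisagreesAt, h j hj]
  have hcoh : coherentSet f u pr o P i = coherentSet f u pr o Q i := by
    funext δ ζ
    ext β
    refine and_congr_right fun _ => and_congr_left fun _ => forall₂_congr fun j hj => ?_
    rw [hdis j hj]
  unfold candidate
  rw [hcoh]

theorem candidate_lt {S : Set Ordinal} (hf : ∀ β < o, ∀ α < (f β).1, (f β).2 α < o)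
    (hu : ∀ δ ∈ S, u δ ⊆ Iio δ) (hS : S ⊆ Iio o) (ho : 0 < o) (G : Ordinal → Ordinal → Ordinal)
    (i : Ordinal) : ∀ δ ∈ S, ∀ ζ < δ, candidate f u pr o G i δ ζ < o := by
  intro δ hδ ζ _
  unfold candidate
  split_ifs with h
  · obtain ⟨hβu, -, hdom⟩ := h.some_mem
    exact hf _ ((hu δ hδ hβu).trans (hS hδ)) _ hdom
  · exact ho

theorem exists_first_disagreement {G : Ordinal → Ordinal → Ordinal} {g : Ordinal → Ordinal}
    {δ i : Ordinal} (hδ : δ < o) (hg : ∀ j < i, ∀ ζ < o, g (pr (j, ζ)) = G j ζ)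
    (hguess : ∀ b < δ, ∃ α ∈ u δ, b ≤ α ∧ ∃ β ∈ u δ, (f β).1 = α ∧ ∀ ζ < α, (f β).2 ζ = g ζ)
    (hclosed : ∀ ζ < δ, Order.succ (pr (i, ζ)) < δ)
    (hne : ¬ ∀ ζ < δ, G i ζ = candidate f u pr o G i δ ζ) :
    ∃ β ∈ u δ, DisagreesAt f pr o G i β ∧ ∀ j < i, ¬ DisagreesAt f pr o G j β := by
  obtain ⟨ζ, hζ, hne⟩ := not_forall₂.1 hne
  obtain ⟨α, -, hα, β, hβ, rfl, hβg⟩ := hguess _ (hclosed ζ hζ)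
  have hcoh : (coherentSet f u pr o G i δ ζ).Nonempty :=
    ⟨β, hβ, fun j hj ⟨ζ', hζ', hdom, hne'⟩ => hne' ((hβg _ hdom).trans (hg j hj ζ' hζ')),
      Order.succ_le_iff.1 hα⟩
  obtain ⟨hβ₀, hβ₀coh, hβ₀dom⟩ := hcoh.some_mem
  rw [candidate, dif_pos hcoh] at hne
  exact ⟨_, hβ₀, ⟨ζ, hζ.trans hδ, hβ₀dom, Ne.symm hne⟩, hβ₀coh⟩

theorem exists_defeating_sequence {D : Set (Set Ordinal.{0})} {S : Set Ordinal}
    (hS : DPos o D S) (hnd : ¬ DiamondFilter o D) (hf : ∀ β < o, ∀ α < (f β).1, (f β).2 α < o)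
    (hu : ∀ δ ∈ S, u δ ⊆ Iio δ) (ho : 0 < o) :
    ∃ G : Ordinal → Ordinal → Ordinal, (∀ i, ∀ ζ < o, G i ζ < o) ∧
      ∀ i, Iio o \ {δ | δ ∈ S ∧ ∀ ζ < δ, G i ζ = candidate f u pr o G i δ ζ} ∈ D := by
  choose! defeater hdefeater_lt hdefeater using exists_defeater_of_not_diamondFilter hS hnd
  have hcand_lt := candidate_lt (pr := pr) hf hu hS.1 ho
  obtain ⟨G, hG⟩ := exists_forall_eq_of_congr (fun P i => defeater (candidate f u pr o P i))
    fun P Q i h => by rw [candidate_congr h]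
  refine ⟨G, fun i => hG i ▸ hdefeater_lt _ (hcand_lt _ _), fun i => ?_⟩
  rw [hG i]
  exact hdefeater _ (hcand_lt G i)

theorem mk_Iio_le_of_forall_defeated {G : Ordinal → Ordinal → Ordinal} {g : Ordinal → Ordinal}
    {κ δ : Ordinal} (hδ : δ < o) (hg : ∀ i < κ, ∀ ζ < o, g (pr (i, ζ)) = G i ζ)
    (hguess : ∀ b < δ, ∃ α ∈ u δ, b ≤ α ∧ ∃ β ∈ u δ, (f β).1 = α ∧ ∀ ζ < α, (f β).2 ζ = g ζ)
    (hclosed : ∀ i < κ, ∀ ζ < δ, Order.succ (pr (i, ζ)) < δ)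
    (hdefeated : ∀ i < κ, ¬ ∀ ζ < δ, G i ζ = candidate f u pr o G i δ ζ) :
    #(Iio κ) ≤ #(u δ) := by
  refine mk_le_of_forall_exists_first (fun i β => DisagreesAt f pr o G i.1 β) (u δ) fun i => ?_
  obtain ⟨β, hβ, hdis, hfirst⟩ := exists_first_disagreement hδ
    (fun j hj => hg j (hj.trans i.2)) hguess (hclosed i i.2) (hdefeated i i.2)
  exact ⟨β, hβ, hdis, fun j hj => hfirst j hj⟩

end Construction

theorem stmt6_general (l χ : Cardinal.{0}) (hreg : l.IsRegular)
    (f : Ordinal → Ordinal × (Ordinal → Ordinal))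
    (hf1 : ∀ β < l.ord, (f β).1 < l.ord ∧ ∀ α < (f β).1, (f β).2 α < l.ord)
    (D : Set (Set Ordinal.{0})) (hD : IsFilterOn l.ord D) (hDclub : ExtendsClubs l.ord D)
    (hcomp : CompleteFor (Order.succ χ) l.ord D)
    (S : Set Ordinal) (hS : DPos l.ord D S)
    (u : Ordinal → Set Ordinal) (hu : ∀ α ∈ S, u α ⊆ Set.Iio α)
    (hχ : Cardinal.lift.{1} χ = ⨆ α : S, Order.succ (Cardinal.mk ↥(u α.1)))
    (hχl : χ < l)
    (hguess : ∀ g : Ordinal → Ordinal, (∀ α < l.ord, g α < l.ord) →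
        DPos l.ord D {δ | δ ∈ S ∧ ∀ b < δ, ∃ α ∈ u δ, b ≤ α ∧
          ∃ β ∈ u δ, (f β).1 = α ∧ ∀ ζ < α, (f β).2 ζ = g ζ}) :
    DiamondFilter l.ord D := by
  by_contra hnd
  obtain hω | hω := hreg.aleph0_le.lt_or_eq
  swap
  · rw [← hω, ord_aleph0] at hD hDclub
    exact not_extendsClubs_omega0 hD hDclub
  have hlim : Order.IsSuccLimit l.ord := isSuccLimit_ord hreg.aleph0_le
  obtain ⟨pr, hpr_lt, hpr_inj⟩ := exists_injOn_prod_Iio hreg.aleph0_le hχl.le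
  obtain ⟨G, hG_lt, hG⟩ := exists_defeating_sequence (u := u) (pr := pr) hS hnd
    (fun β hβ => (hf1 β hβ).2) hu hlim.pos
  obtain ⟨g, hg_lt, hg⟩ := hpr_inj.exists_comp_eqOn ⟨0, hlim.pos⟩ (G := fun p => G p.1 p.2)
    fun p hp => hG_lt _ _ hp.2
  have hclub := isClubIn_closurePoints hreg hω.ne' hχl (fun i ζ => Order.succ (pr (i, ζ)))
    fun i hi ζ hζ => hlim.succ_lt (hpr_lt ⟨hi, hζ⟩)
  have hdefeated := hcomp χ.ord (by rw [card_ord]; exact Order.lt_succ χ) _ fun i _ => hG i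
  obtain ⟨δ, ⟨hδS, hδguess⟩, ⟨-, hδdefeated⟩, hδl, hδclosed⟩ :=
    (hguess g fun ξ _ => hg_lt ξ).inter_nonempty hD (hD.2.2.2.2 _ hdefeated _ (hDclub _ hclub))
  have hu_lt : #(u δ) < Cardinal.lift.{1} χ :=
    hχ ▸ (Order.lt_succ _).trans_le (le_ciSup Cardinal.bddAbove_of_small (⟨δ, hδS⟩ : S))
  refine hu_lt.not_ge ?_
  rw [← card_ord χ, ← Cardinal.mk_Iio_ordinal]
  exact mk_Iio_le_of_forall_defeated hδl (fun i hi ζ hζ => hg ⟨hi, hζ⟩) hδguess hδclosed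
    fun i hi h => (mem_iInter₂.1 hδdefeated i hi).2 ⟨hδS, h⟩

theorem stmt6 (l χ : Cardinal.{0}) (hreg : l.IsRegular) (hpow : l ^< l = l)
    (f : Ordinal → Ordinal × (Ordinal → Ordinal))
    (hf1 : ∀ β < l.ord, (f β).1 < l.ord ∧ ∀ α < (f β).1, (f β).2 α < l.ord)
    (hf2 : ∀ β < l.ord, ∀ g : Ordinal → Ordinal, (∀ α < β, g α < l.ord) →
        ∃ γ < l.ord, (f γ).1 = β ∧ ∀ α < β, (f γ).2 α = g α)
    (D : Set (Set Ordinal.{0})) (hD : IsFilterOn l.ord D) (hDclub : ExtendsClubs l.ord D)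
    (hcomp : CompleteFor (Order.succ χ) l.ord D)
    (S : Set Ordinal) (hS : DPos l.ord D S)
    (u : Ordinal → Set Ordinal) (hu : ∀ α ∈ S, u α ⊆ Set.Iio α)
    (hχ : Cardinal.lift.{1} χ = ⨆ α : S, Order.succ (Cardinal.mk ↥(u α.1)))
    (hχl : χ < l)
    (hguess : ∀ g : Ordinal → Ordinal, (∀ α < l.ord, g α < l.ord) →
        DPos l.ord D {δ | δ ∈ S ∧ ∀ b < δ, ∃ α ∈ u δ, b ≤ α ∧
          ∃ β ∈ u δ, (f β).1 = α ∧ ∀ ζ < α, (f β).2 ζ = g ζ}) :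
    DiamondFilter l.ord D :=
  stmt6_general l χ hreg f hf1 D hD hDclub hcomp S hS u hu hχ hχl hguess
end

section
/- Let λ be regular uncountable, χ < λ with χ > ℵ₀, and for each ordinal α < λ let ⟨u_{α,ε} : ε < χ⟩ be a ⊆-increasing continuous sequence of subsets of α with union α and |u_{α,ε}| ≤ ℵ₀ + |ε|. Then for every limit ordinal δ < λ with cf(δ) ≠ cf(χ) and every function F : δ → δ with F(α) ≥ α for cofinally many α < δ, there exists ε(*) < χ such that the set {α < δ : α ∈ u_{δ,ε(*)} and F(α) ∈ u_{δ,ε(*)}} is unbounded in δ. -/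
open Ordinal Set Cardinal

/-!
Each `α < δ` gets a level below `χ` at which both `α` and `F α` already appear in the
filtration of `δ`. The theorem is then a pigeonhole principle for a map `Iio δ → Iio χ.ord`
between orders of different cofinalities: the preimage of some initial segment is cofinal.
-/

universe u

theorem Order.exists_isCofinal_preimage_Iic_of_cof_ne {α β : Type u} [LinearOrder α]
    [LinearOrder β] (h : Order.cof α ≠ Order.cof β) (f : α → β) :
    ∃ b, IsCofinal (f ⁻¹' Iic b) := by
  rcases h.lt_or_gt with h | h
  · -- The image of a cofinal set of minimal size is too small to be cofinal in `β`.
    obtain ⟨s, hs, hs_card⟩ := Order.exists_cof_eq α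
    have himage : ¬IsCofinal (f '' s) := fun hcof ↦
      (Order.cof_le hcof).not_gt ((mk_image_le.trans hs_card.le).trans_lt h)
    obtain ⟨b, hb⟩ := not_isCofinal_iff.1 himage
    exact ⟨b, hs.mono fun a ha ↦ (hb _ (mem_image_of_mem f ha)).le⟩
  · -- `α` is covered by fewer than `cof α` of the sets `f ⁻¹' Iic b`.
    obtain ⟨t, ht, ht_card⟩ := Order.exists_cof_eq β
    have hcover : IsCofinal (⋃ b : t, f ⁻¹' Iic b.1) := fun a ↦ by
      obtain ⟨b, hb, hfb⟩ := ht (f a)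
      exact ⟨a, mem_iUnion.2 ⟨⟨b, hb⟩, hfb⟩, le_rfl⟩
    obtain ⟨b, hb⟩ := isCofinal_of_isCofinal_iUnion hcover (ht_card.trans_lt h)
    exact ⟨b, hb⟩

theorem exists_mem_mem_of_mem_biUnion {X ι : Type*} [LinearOrder ι] {κ : ι} {s : ι → Set X}
    (hs : ∀ i j, i ≤ j → j < κ → s i ⊆ s j) {x y : X}
    (hx : x ∈ ⋃ i ∈ Iio κ, s i) (hy : y ∈ ⋃ i ∈ Iio κ, s i) :
    ∃ i < κ, x ∈ s i ∧ y ∈ s i := by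
  simp only [mem_iUnion, mem_Iio, exists_prop] at hx hy
  obtain ⟨i, hi, hxi⟩ := hx
  obtain ⟨j, hj, hyj⟩ := hy
  have hmax : max i j < κ := max_lt hi hj
  exact ⟨max i j, hmax, hs _ _ (le_max_left i j) hmax hxi, hs _ _ (le_max_right i j) hmax hyj⟩

theorem Ordinal.cof_Iio_ne_cof_Iio {δ κ : Ordinal} (h : δ.cof ≠ κ.cof) :
    Order.cof (Iio δ) ≠ Order.cof (Iio κ) := by
  rwa [cof_Iio, cof_Iio, ← lift_cof, ← lift_cof, Ne, Cardinal.lift_inj]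

theorem stmt11_general (l χ : Cardinal.{0})
    (u : Ordinal → Ordinal → Set Ordinal)
    (hmono : ∀ α < l.ord, ∀ ε ε' : Ordinal, ε ≤ ε' → ε' < χ.ord → u α ε ⊆ u α ε')
    (hunion : ∀ α < l.ord, ⋃ ε ∈ Set.Iio χ.ord, u α ε = Set.Iio α) :
    ∀ δ < l.ord, Order.IsSuccLimit δ → δ.cof ≠ χ.ord.cof →
      ∀ F : Ordinal → Ordinal, (∀ α < δ, F α < δ) →
        (∀ b < δ, ∃ α, b ≤ α ∧ α < δ ∧ α ≤ F α) →
        ∃ ε < χ.ord, ∀ b < δ, ∃ α, b ≤ α ∧ α < δ ∧ α ∈ u δ ε ∧ F α ∈ u δ ε := by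
  intro δ hδ _ hcf F hF _
  have hlevel : ∀ a : Iio δ, ∃ ε < χ.ord, a.1 ∈ u δ ε ∧ F a ∈ u δ ε := fun a ↦
    exists_mem_mem_of_mem_biUnion (hmono δ hδ) (by rw [hunion δ hδ]; exact a.2)
      (by rw [hunion δ hδ]; exact hF a a.2)
  choose level hlevel_lt hlevel_mem using hlevel
  obtain ⟨ε, hε⟩ := Order.exists_isCofinal_preimage_Iic_of_cof_ne
    (Ordinal.cof_Iio_ne_cof_Iio hcf) fun a ↦ (⟨level a, hlevel_lt a⟩ : Iio χ.ord)
  refine ⟨ε, ε.2, fun b hb ↦ ?_⟩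
  obtain ⟨a, ha, hba⟩ := hε ⟨b, hb⟩
  exact ⟨a, hba, a.2, hmono δ hδ _ _ ha ε.2 (hlevel_mem a).1,
    hmono δ hδ _ _ ha ε.2 (hlevel_mem a).2⟩

theorem stmt11 (l χ : Cardinal.{0}) (hreg : l.IsRegular) (hunc : ℵ₀ < l)
    (hχ0 : ℵ₀ < χ) (hχl : χ < l)
    (hcard : ∀ α < l.ord, α.card ≤ χ)
    (u : Ordinal → Ordinal → Set Ordinal)
    (hmono : ∀ α < l.ord, ∀ ε ε' : Ordinal, ε ≤ ε' → ε' < χ.ord → u α ε ⊆ u α ε')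
    (hcont : ∀ α < l.ord, ∀ ε < χ.ord, Order.IsSuccLimit ε → u α ε = ⋃ ζ ∈ Set.Iio ε, u α ζ)
    (hunion : ∀ α < l.ord, ⋃ ε ∈ Set.Iio χ.ord, u α ε = Set.Iio α)
    (hsmall : ∀ α < l.ord, ∀ ε < χ.ord,
        Cardinal.mk ↥(u α ε) ≤ Cardinal.lift.{1} (ℵ₀ + ε.card)) :
    ∀ δ < l.ord, Order.IsSuccLimit δ → δ.cof ≠ χ.ord.cof →
      ∀ F : Ordinal → Ordinal, (∀ α < δ, F α < δ) →
        (∀ b < δ, ∃ α, b ≤ α ∧ α < δ ∧ α ≤ F α) →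
        ∃ ε < χ.ord, ∀ b < δ, ∃ α, b ≤ α ∧ α < δ ∧ α ∈ u δ ε ∧ F α ∈ u δ ε :=
  stmt11_general l χ u hmono hunion
end
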